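/- Let λ̲ < λ̄ be real numbers and let S = {s ∈ ℂ : -λ̄ < Re(s) < -λ̲} be the open vertical strip. Let G : S → ℂ be analytic and bounded. Then for every real c with c < sup_{s∈S}|G(s)| there exists an analytic function U : S → ℂ with 0 < ‖U‖₂ < ∞, where ‖U‖₂ := sup_{λ∈(λ̲,λ̄)} ((1/2π)∫_ℝ |U(-λ+iω)|² dω)^{1/2}, such that ‖G·U‖₂ > c · ‖U‖₂. -/

import Mathlib

open MeasureTheory

/-- The open vertical strip `{s : ℂ | -λ̄ < Re s < -λ̲}`. -/
def strip (llo lhi : ℝ) : Set ℂ := {s : ℂ | -lhi < s.re ∧ s.re < -llo}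

/-- The `H₂` norm on the strip, valued in `ℝ≥0∞`:
`sup_{λ ∈ (λ̲,λ̄)} ((1/2π)∫ |f(-λ+iω)|² dω)^{1/2}`. -/
noncomputable def H2Norm (llo lhi : ℝ) (f : ℂ → ℂ) : ENNReal :=
  ⨆ l ∈ Set.Ioo llo lhi,
    (ENNReal.ofReal (1 / (2 * Real.pi)) *
      ∫⁻ ω : ℝ, (‖f (-l + ω * Complex.I)‖₊ : ENNReal) ^ (2 : ℝ)) ^ (1 / 2 : ℝ)

open Set Real Metric
open scoped ENNReal

/-!
Pick `s₀` in the strip with `‖G s₀‖ > c` and test on `Uₙ = Gⁿ · exp ((s - s₀)²)`; these lie in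
`H₂` because `G` is bounded and the Gaussian factor decays along every vertical line. If
`‖G U‖₂ ≤ c ‖U‖₂` for all of them, then `‖Uₙ‖₂ ≤ cⁿ ‖U₀‖₂`. But evaluation at `s₀` is bounded on
`H₂`: by the mean value property of `f²`, `|f s₀|²` is at most the mean of `|f|²` over a disc around
`s₀`, and that disc integral is dominated by the integrals of `|f|²` along the vertical lines
through the disc. Hence `‖Uₙ‖₂ ≳ ‖G s₀‖ⁿ`, which beats `cⁿ` for large `n`.
-/

theorem circleMap_mem_ball {z₀ : ℂ} {ρ r : ℝ} (h : |ρ| < r) (θ : ℝ) :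
    circleMap z₀ ρ θ ∈ ball z₀ r := by
  rwa [mem_ball, mem_sphere.1 (circleMap_mem_sphere' z₀ ρ θ)]

theorem ofReal_two_pi_mul_enorm_sq_le_lintegral_circleMap {f : ℂ → ℂ} {z₀ : ℂ} {ρ : ℝ}
    (hf : DiffContOnCl ℂ f (ball z₀ |ρ|)) :
    ENNReal.ofReal (2 * π) * ‖f z₀‖ₑ ^ 2 ≤
      ∫⁻ θ in Ioo (-π) π, ‖f (circleMap z₀ ρ θ)‖ₑ ^ 2 := by
  have hf2 : DiffContOnCl ℂ (fun z => f z ^ 2) (ball z₀ |ρ|) :=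
    ⟨hf.differentiableOn.pow 2, hf.continuousOn.pow 2⟩
  have hmean := hf2.circleAverage
  rw [circleAverage_eq_integral_add (-π), intervalIntegral.integral_comp_add_right
    (fun θ => f (circleMap z₀ ρ θ) ^ 2), intervalIntegral.integral_of_le (by linarith [pi_pos]),
    show 0 + -π = -π by ring, show 2 * π + -π = π by ring] at hmean
  have h2pi : (0:ℝ) < 2 * π := by positivity
  calc ENNReal.ofReal (2 * π) * ‖f z₀‖ₑ ^ 2
      = ‖∫ θ in Ioc (-π) π, f (circleMap z₀ ρ θ) ^ 2‖ₑ := by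
        rw [← enorm_pow, ← hmean, enorm_smul, ← mul_assoc,
          Real.enorm_eq_ofReal (by positivity), ← ENNReal.ofReal_mul h2pi.le,
          mul_inv_cancel₀ h2pi.ne', ENNReal.ofReal_one, one_mul]
    _ ≤ ∫⁻ θ in Ioc (-π) π, ‖f (circleMap z₀ ρ θ) ^ 2‖ₑ :=
        enorm_integral_le_lintegral_enorm _
    _ = ∫⁻ θ in Ioo (-π) π, ‖f (circleMap z₀ ρ θ)‖ₑ ^ 2 := by
        simp_rw [enorm_pow]; exact setLIntegral_congr Ioo_ae_eq_Ioc.symm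

theorem lintegral_Ioo_zero_ofReal_self {r : ℝ} (hr : 0 ≤ r) :
    ∫⁻ ρ in Ioo 0 r, ENNReal.ofReal ρ = ENNReal.ofReal (r ^ 2 / 2) := by
  have hint : IntegrableOn (fun ρ : ℝ => ρ) (Ioo 0 r) :=
    (continuous_id.integrableOn_Icc).mono_set Ioo_subset_Icc_self
  rw [← ofReal_integral_eq_lintegral_ofReal hint
      (ae_restrict_of_forall_mem measurableSet_Ioo fun ρ hρ => hρ.1.le),
    ← integral_Ioc_eq_integral_Ioo, ← intervalIntegral.integral_of_le hr, integral_id]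
  ring_nf

theorem ofReal_pi_mul_sq_mul_enorm_sq_le_lintegral_ball {f : ℂ → ℂ} {z₀ : ℂ} {r : ℝ}
    (hr : 0 ≤ r) (hf : DifferentiableOn ℂ f (ball z₀ r)) :
    ENNReal.ofReal (π * r ^ 2) * ‖f z₀‖ₑ ^ 2 ≤ ∫⁻ z in ball z₀ r, ‖f z‖ₑ ^ 2 := by
  let F : ℂ → ℝ≥0∞ := (ball z₀ r).indicator fun z => ‖f z‖ₑ ^ 2
  have hpolar : ∫⁻ z in ball z₀ r, ‖f z‖ₑ ^ 2 =
      ∫⁻ p in polarCoord.target, ENNReal.ofReal p.1 • F (z₀ + Complex.polarCoord.symm p) := by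
    rw [Complex.lintegral_comp_polarCoord_symm (fun w => F (z₀ + w)), lintegral_add_left_eq_self,
      lintegral_indicator measurableSet_ball]
  have hsub : Ioo 0 r ×ˢ Ioo (-π) π ⊆ polarCoord.target :=
    prod_mono Ioo_subset_Ioi_self subset_rfl
  have hmeas : AEMeasurable
      (fun p : ℝ × ℝ => ENNReal.ofReal p.1 * ‖f (circleMap z₀ p.1 p.2)‖ₑ ^ 2)
      (volume.restrict (Ioo 0 r ×ˢ Ioo (-π) π)) := by
    have hcont : ContinuousOn (fun p : ℝ × ℝ => f (circleMap z₀ p.1 p.2))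
        (Ioo 0 r ×ˢ Ioo (-π) π) :=
      hf.continuousOn.comp (by unfold circleMap; fun_prop) fun p hp =>
        circleMap_mem_ball (by rw [abs_of_pos hp.1.1]; exact hp.1.2) p.2
    exact measurable_fst.ennreal_ofReal.aemeasurable.mul
      ((hcont.aemeasurable (measurableSet_Ioo.prod measurableSet_Ioo)).enorm.pow_const 2)
  calc ENNReal.ofReal (π * r ^ 2) * ‖f z₀‖ₑ ^ 2
      = ∫⁻ ρ in Ioo 0 r, ENNReal.ofReal ρ * (ENNReal.ofReal (2 * π) * ‖f z₀‖ₑ ^ 2) := by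
        rw [lintegral_mul_const' _ _ (by finiteness), lintegral_Ioo_zero_ofReal_self hr,
          ← mul_assoc, ← ENNReal.ofReal_mul (by positivity)]
        ring_nf
    _ ≤ ∫⁻ ρ in Ioo 0 r, ∫⁻ θ in Ioo (-π) π,
          ENNReal.ofReal ρ * ‖f (circleMap z₀ ρ θ)‖ₑ ^ 2 := by
        refine setLIntegral_mono' measurableSet_Ioo fun ρ hρ => ?_
        rw [lintegral_const_mul' _ _ ENNReal.ofReal_ne_top]
        gcongr
        refine ofReal_two_pi_mul_enorm_sq_le_lintegral_circleMap (hf.diffContOnCl_ball ?_)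
        exact closedBall_subset_ball (by rw [abs_of_pos hρ.1]; exact hρ.2)
    _ = ∫⁻ p in Ioo 0 r ×ˢ Ioo (-π) π,
          ENNReal.ofReal p.1 * ‖f (circleMap z₀ p.1 p.2)‖ₑ ^ 2 := by
        rw [Measure.volume_eq_prod, setLIntegral_prod _ (by rwa [← Measure.volume_eq_prod])]
    _ ≤ ∫⁻ p in polarCoord.target, ENNReal.ofReal p.1 • F (z₀ + Complex.polarCoord.symm p) := by
        refine (setLIntegral_congr_fun (measurableSet_Ioo.prod measurableSet_Ioo)
          fun p hp => ?_).trans_le (lintegral_mono_set hsub)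
        have hcirc : circleMap z₀ p.1 p.2 = z₀ + Complex.polarCoord.symm p := by
          simp [circleMap, Complex.exp_mul_I, ← Complex.ofReal_cos, ← Complex.ofReal_sin]
        rw [smul_eq_mul, ← hcirc]
        dsimp only [F]
        rw [indicator_of_mem
          (circleMap_mem_ball (by rw [abs_of_pos hp.1.1]; exact hp.1.2) p.2)]
    _ = ∫⁻ z in ball z₀ r, ‖f z‖ₑ ^ 2 := hpolar.symm

theorem Complex.lintegral_le_lintegral_lintegral (g : ℂ → ℝ≥0∞) :
    ∫⁻ z, g z ≤ ∫⁻ x : ℝ, ∫⁻ y : ℝ, g (x + y * Complex.I) := by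
  rw [← (Complex.volume_preserving_equiv_real_prod.symm).lintegral_comp_emb
    Complex.measurableEquivRealProd.symm.measurableEmbedding, Measure.volume_eq_prod]
  refine (lintegral_prod_le _).trans_eq ?_
  simp [Complex.measurableEquivRealProd_symm_apply, Complex.mk_eq_add_mul_I]

theorem exists_pos_and_mul_lt_succ_of_pow_le {a : ℕ → ℝ} {K b c : ℝ} (hK : 0 ≤ K)
    (hb : 0 ≤ b) (hcb : c < b) (ha : ∀ n, b ^ n ≤ K * a n) :
    ∃ n, 0 < a n ∧ c * a n < a (n + 1) := by
  by_contra! h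
  have hKa : 0 < K * a 0 := zero_lt_one.trans_le (by simpa using ha 0)
  have ha₀ : 0 < a 0 := pos_of_mul_pos_right hKa hK
  rcases lt_or_ge c 0 with hc | hc
  · have ha₁ : a 1 < 0 := (h 0 ha₀).trans_lt (mul_neg_of_neg_of_pos hc ha₀)
    have hK₀ : 0 < K := pos_of_mul_pos_left hKa ha₀.le
    linarith [pow_one b ▸ ha 1, mul_neg_of_pos_of_neg hK₀ ha₁]
  have hb₀ : 0 < b := hc.trans_lt hcb
  have hpos : ∀ n, 0 < a n := fun n =>
    pos_of_mul_pos_right ((pow_pos hb₀ n).trans_le (ha n)) hK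
  have hdecay : ∀ n, a n ≤ c ^ n * a 0 := by
    intro n
    induction n with
    | zero => simp
    | succ n ih => calc
        a (n + 1) ≤ c * a n := h n (hpos n)
        _ ≤ c * (c ^ n * a 0) := by gcongr
        _ = c ^ (n + 1) * a 0 := by ring
  obtain ⟨n, hn⟩ := exists_pow_lt_of_lt_one (one_div_pos.2 hKa) ((div_lt_one hb₀).2 hcb)
  have hbn := (ha n).trans (mul_le_mul_of_nonneg_left (hdecay n) hK)
  rw [show c ^ n = (c / b) ^ n * b ^ n by rw [div_pow, div_mul_cancel₀ _ (pow_pos hb₀ n).ne']]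
    at hbn
  rw [lt_div_iff₀ hKa] at hn
  nlinarith [pow_pos hb₀ n]

-- In `ℝ`, the inner supremum `⨆ _ : x ∈ S, f x` is the junk value `0` for `x ∉ S`.
theorem exists_mem_lt_of_lt_biSup {α : Type*} {S : Set α} {f : α → ℝ} {c : ℝ} (hS : S.Nonempty)
    (hf : ∀ x ∈ S, 0 ≤ f x) (h : c < ⨆ x ∈ S, f x) : ∃ x ∈ S, c < f x := by
  by_contra! hle
  obtain ⟨x, hx⟩ := hS
  have hc : 0 ≤ c := (hf x hx).trans (hle x hx)
  exact h.not_ge (Real.iSup_le (fun x => Real.iSup_le (hle x) hc) hc)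

section H2Norm

variable {llo lhi : ℝ}

theorem H2Norm_le_iff {f : ℂ → ℂ} {B : ℝ≥0∞} :
    H2Norm llo lhi f ≤ B ↔ ∀ l ∈ Ioo llo lhi,
      ∫⁻ ω : ℝ, ‖f (-l + ω * Complex.I)‖ₑ ^ 2 ≤ ENNReal.ofReal (2 * π) * B ^ 2 := by
  simp only [H2Norm, iSup₂_le_iff, one_div, ENNReal.rpow_inv_le_iff two_pos, ENNReal.rpow_two,
    ENNReal.ofReal_inv_of_pos two_pi_pos, enorm_eq_nnnorm]
  exact forall₂_congr fun l _ =>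
    ENNReal.inv_mul_le_iff (ENNReal.ofReal_pos.2 two_pi_pos).ne' ENNReal.ofReal_ne_top

theorem H2Norm_le_mul_of_enorm_le {f g : ℂ → ℂ} {C : ℝ≥0∞}
    (hC : C ≠ ⊤) (h : ∀ z ∈ strip llo lhi, ‖f z‖ₑ ≤ C * ‖g z‖ₑ) :
    H2Norm llo lhi f ≤ C * H2Norm llo lhi g := by
  refine H2Norm_le_iff.2 fun l hl => ?_
  have hline : ∀ ω : ℝ, -(l : ℂ) + ω * Complex.I ∈ strip llo lhi := fun ω => by
    simp [strip, hl.1, hl.2]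
  calc ∫⁻ ω : ℝ, ‖f (-l + ω * Complex.I)‖ₑ ^ 2
      ≤ ∫⁻ ω : ℝ, C ^ 2 * ‖g (-l + ω * Complex.I)‖ₑ ^ 2 :=
        lintegral_mono fun ω => by rw [← mul_pow]; gcongr; exact h _ (hline ω)
    _ = C ^ 2 * ∫⁻ ω : ℝ, ‖g (-l + ω * Complex.I)‖ₑ ^ 2 :=
        lintegral_const_mul' _ _ (by finiteness)
    _ ≤ C ^ 2 * (ENNReal.ofReal (2 * π) * H2Norm llo lhi g ^ 2) := by
        gcongr; exact H2Norm_le_iff.1 le_rfl l hl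
    _ = ENNReal.ofReal (2 * π) * (C * H2Norm llo lhi g) ^ 2 := by ring

theorem H2Norm_lt_top_of_lintegral_le {f : ℂ → ℂ} {A : ℝ≥0∞} (hA : A ≠ ⊤)
    (h : ∀ l ∈ Ioo llo lhi, ∫⁻ ω : ℝ, ‖f (-l + ω * Complex.I)‖ₑ ^ 2 ≤ A) :
    H2Norm llo lhi f < ⊤ := by
  refine (H2Norm_le_iff (B := A ^ (1 / 2 : ℝ)).2 fun l hl => (h l hl).trans ?_).trans_lt
    (by finiteness)
  rw [← ENNReal.rpow_two, ← ENNReal.rpow_mul, one_div, inv_mul_cancel₀ two_ne_zero,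
    ENNReal.rpow_one]
  exact le_mul_of_one_le_left zero_le (ENNReal.one_le_ofReal.2 (by linarith [pi_gt_three]))

theorem setLIntegral_re_preimage_Ioo_le {f : ℂ → ℂ} {a b : ℝ} (ha : -lhi ≤ a) (hb : b ≤ -llo) :
    ∫⁻ z in Complex.re ⁻¹' Ioo a b, ‖f z‖ₑ ^ 2 ≤
      ENNReal.ofReal (b - a) * (ENNReal.ofReal (2 * π) * H2Norm llo lhi f ^ 2) := by
  set band := Complex.re ⁻¹' Ioo a b
  have hline : ∀ x : ℝ, ∫⁻ y : ℝ, band.indicator (fun z => ‖f z‖ₑ ^ 2) (x + y * Complex.I) ≤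
      (Ioo a b).indicator (fun _ => ENNReal.ofReal (2 * π) * H2Norm llo lhi f ^ 2) x := by
    intro x
    by_cases hx : x ∈ Ioo a b
    · have hmem : ∀ y : ℝ, (x + y * Complex.I : ℂ) ∈ band := fun y => by simpa [band] using hx
      simp only [indicator_of_mem (hmem _), indicator_of_mem hx]
      simpa using H2Norm_le_iff.1 le_rfl (-x) ⟨by linarith [hx.2], by linarith [hx.1]⟩
    · have hmem : ∀ y : ℝ, (x + y * Complex.I : ℂ) ∉ band := fun y => by simpa [band] using hx
      simp [indicator_of_notMem (hmem _), indicator_of_notMem hx]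
  calc ∫⁻ z in band, ‖f z‖ₑ ^ 2
      = ∫⁻ z, band.indicator (fun z => ‖f z‖ₑ ^ 2) z :=
        (lintegral_indicator (measurableSet_Ioo.preimage Complex.measurable_re) _).symm
    _ ≤ ∫⁻ x : ℝ, ∫⁻ y : ℝ, band.indicator (fun z => ‖f z‖ₑ ^ 2) (x + y * Complex.I) :=
        Complex.lintegral_le_lintegral_lintegral _
    _ ≤ ∫⁻ x : ℝ, (Ioo a b).indicator
          (fun _ => ENNReal.ofReal (2 * π) * H2Norm llo lhi f ^ 2) x := lintegral_mono hline
    _ = _ := by rw [lintegral_indicator_const measurableSet_Ioo, Real.volume_Ioo, mul_comm]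

theorem enorm_le_ofReal_mul_H2Norm {f : ℂ → ℂ} {s₀ : ℂ} {r : ℝ} (hr : 0 < r)
    (h₁ : -lhi ≤ s₀.re - r) (h₂ : s₀.re + r ≤ -llo)
    (hf : DifferentiableOn ℂ f (strip llo lhi)) :
    ‖f s₀‖ₑ ≤ ENNReal.ofReal (2 / √r) * H2Norm llo lhi f := by
  have hball : ball s₀ r ⊆ Complex.re ⁻¹' Ioo (s₀.re - r) (s₀.re + r) := fun z hz => by
    have := (Complex.abs_re_le_norm (z - s₀)).trans_lt (mem_ball_iff_norm.1 hz)
    rw [Complex.sub_re, abs_lt] at this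
    exact ⟨by linarith, by linarith⟩
  have hstrip : ball s₀ r ⊆ strip llo lhi := fun z hz =>
    ⟨by linarith [(hball hz).1], by linarith [(hball hz).2]⟩
  have hπr : ENNReal.ofReal (π * r ^ 2) ≠ 0 := (ENNReal.ofReal_pos.2 (by positivity)).ne'
  rw [← ENNReal.pow_le_pow_left_iff two_ne_zero,
    ← ENNReal.mul_le_mul_iff_right hπr ENNReal.ofReal_ne_top]
  calc ENNReal.ofReal (π * r ^ 2) * ‖f s₀‖ₑ ^ 2
      ≤ ∫⁻ z in ball s₀ r, ‖f z‖ₑ ^ 2 :=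
        ofReal_pi_mul_sq_mul_enorm_sq_le_lintegral_ball hr.le (hf.mono hstrip)
    _ ≤ ∫⁻ z in Complex.re ⁻¹' Ioo (s₀.re - r) (s₀.re + r), ‖f z‖ₑ ^ 2 := lintegral_mono_set hball
    _ ≤ ENNReal.ofReal (s₀.re + r - (s₀.re - r)) *
          (ENNReal.ofReal (2 * π) * H2Norm llo lhi f ^ 2) := setLIntegral_re_preimage_Ioo_le h₁ h₂
    _ = ENNReal.ofReal (π * r ^ 2) * (ENNReal.ofReal (2 / √r) * H2Norm llo lhi f) ^ 2 := by
        rw [show s₀.re + r - (s₀.re - r) = 2 * r by ring, mul_pow,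
          ← ENNReal.ofReal_pow (by positivity), div_pow, Real.sq_sqrt hr.le, ← mul_assoc,
          ← mul_assoc, ← ENNReal.ofReal_mul (by positivity), ← ENNReal.ofReal_mul (by positivity)]
        congr 2
        field_simp

theorem H2Norm_cexp_sq_sub_lt_top (s₀ : ℂ) :
    H2Norm llo lhi (fun s => Complex.exp ((s - s₀) ^ 2)) < ⊤ := by
  have hgauss : Integrable fun ω : ℝ => Real.exp (-2 * (ω - s₀.im) ^ 2) :=
    (integrable_exp_neg_mul_sq two_pos).comp_sub_right s₀.im
  refine H2Norm_lt_top_of_lintegral_le (A := ENNReal.ofReal (Real.exp (2 * ((llo + s₀.re) ^ 2 +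
      (lhi + s₀.re) ^ 2))) * ∫⁻ ω : ℝ, ENNReal.ofReal (Real.exp (-2 * (ω - s₀.im) ^ 2)))
    (ENNReal.mul_ne_top ENNReal.ofReal_ne_top hgauss.lintegral_lt_top.ne) fun l hl => ?_
  rw [← lintegral_const_mul' _ _ ENNReal.ofReal_ne_top]
  refine lintegral_mono fun ω => ?_
  have hre : ((-(l : ℂ) + ω * Complex.I - s₀) ^ 2).re = (l + s₀.re) ^ 2 - (ω - s₀.im) ^ 2 := by
    simp only [sq, Complex.mul_re, Complex.sub_re, Complex.add_re, Complex.sub_im, Complex.add_im,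
      Complex.neg_re, Complex.neg_im, Complex.mul_im, Complex.ofReal_re, Complex.ofReal_im,
      Complex.I_re, Complex.I_im]
    ring
  have hbound : (l + s₀.re) ^ 2 ≤ (llo + s₀.re) ^ 2 + (lhi + s₀.re) ^ 2 := by
    rcases le_total 0 (l + s₀.re) with h | h
    · nlinarith [pow_le_pow_left₀ h (by linarith [hl.2] : l + s₀.re ≤ lhi + s₀.re) 2]
    · nlinarith [sq_le_sq' (by linarith [hl.1] : -(-(llo + s₀.re)) ≤ l + s₀.re)
        (by linarith [hl.1])]
  rw [← ofReal_norm, ← ENNReal.ofReal_pow (norm_nonneg _), ← ENNReal.ofReal_mul (by positivity),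
    Complex.norm_exp, hre, sq, ← Real.exp_add, ← Real.exp_add]
  exact ENNReal.ofReal_le_ofReal (Real.exp_le_exp.2 (by nlinarith))

end H2Norm

/-- Sharpness of the norm of the multiplication operator `M_G` on `H₂` of a strip
(lower bound half of Theorem 4 of the paper): for every `c` below the sup norm of `G`
there is `U ∈ H₂` with `‖G U‖₂ > c ‖U‖₂`. -/
theorem multiplication_operator_norm_sharp (llo lhi : ℝ) (hl : llo < lhi)
    (G : ℂ → ℂ)
    (hG_an : DifferentiableOn ℂ G (strip llo lhi))
    (hG_bdd : ∃ M : ℝ, ∀ s ∈ strip llo lhi, ‖G s‖ ≤ M)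
    (c : ℝ) (hc : c < ⨆ s ∈ strip llo lhi, ‖G s‖) :
    ∃ U : ℂ → ℂ, DifferentiableOn ℂ U (strip llo lhi) ∧
      0 < H2Norm llo lhi U ∧ H2Norm llo lhi U < ⊤ ∧
      c * (H2Norm llo lhi U).toReal <
        (H2Norm llo lhi (fun s => G s * U s)).toReal := by
  obtain ⟨s₀, hs₀, hcs₀⟩ := exists_mem_lt_of_lt_biSup
    ⟨((-(llo + lhi) / 2 : ℝ) : ℂ), by constructor <;> simp <;> linarith⟩
    (fun s _ => norm_nonneg (G s)) hc
  obtain ⟨M, hM⟩ := hG_bdd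
  obtain ⟨r, hr, h₁, h₂⟩ : ∃ r : ℝ, 0 < r ∧ -lhi ≤ s₀.re - r ∧ s₀.re + r ≤ -llo :=
    ⟨min (s₀.re + lhi) (-llo - s₀.re), lt_min (by linarith [hs₀.1]) (by linarith [hs₀.2]),
      by linarith [min_le_left (s₀.re + lhi) (-llo - s₀.re)],
      by linarith [min_le_right (s₀.re + lhi) (-llo - s₀.re)]⟩
  set U : ℕ → ℂ → ℂ := fun n s => G s ^ n * Complex.exp ((s - s₀) ^ 2)
  have hU_diff : ∀ n, DifferentiableOn ℂ (U n) (strip llo lhi) :=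
    fun n => (hG_an.pow n).mul (by fun_prop)
  have hU_fin : ∀ n, H2Norm llo lhi (U n) < ⊤ := fun n =>
    (H2Norm_le_mul_of_enorm_le (C := ENNReal.ofReal M ^ n) (by finiteness) fun z hz => by
      simp only [U, enorm_mul, enorm_pow]
      gcongr
      exact (ofReal_norm _).symm.trans_le (ENNReal.ofReal_le_ofReal (hM z hz))).trans_lt
    (ENNReal.mul_lt_top (by finiteness) (H2Norm_cexp_sq_sub_lt_top _))
  have hU_low : ∀ n, ‖G s₀‖ ^ n ≤ 2 / √r * (H2Norm llo lhi (U n)).toReal := fun n => by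
    have := ENNReal.toReal_mono (ENNReal.mul_ne_top ENNReal.ofReal_ne_top (hU_fin n).ne)
      (enorm_le_ofReal_mul_H2Norm hr h₁ h₂ (hU_diff n))
    simpa [U, ENNReal.toReal_mul, ENNReal.toReal_ofReal (by positivity : 0 ≤ 2 / √r)] using this
  obtain ⟨n, hpos, hlt⟩ :=
    exists_pos_and_mul_lt_succ_of_pow_le (by positivity) (norm_nonneg _) hcs₀ hU_low
  refine ⟨U n, hU_diff n, (ENNReal.toReal_pos_iff.1 hpos).1, hU_fin n, ?_⟩
  convert hlt using 3
  ext s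
  simp only [U]
  ring
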